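/- arXiv:2306.01401 — 2 statements merged into one kernel-verified Lean document; each statement's English description precedes it below -/
import Mathlib

section
/- Let P be a finite set, Z_s a family of subsets of P, and suppose CD ⊆ P and CORE ⊆ CD satisfy P \ CD ∈' Z_s and CD \ CORE ∈' Z_s, meaning there exist Z, Z' ∈ Z_s with P \ CD ⊆ Z and CD \ CORE ⊆ Z'. If moreover Z_s and Z_a satisfy the Q^{(2,1)}(P, Z_s, Z_a) condition and Z* ∈ Z_a, then CORE \ Z* ≠ ∅, i.e., CORE contains an honest party. -/
/-- If `CORE ⊆ CD ⊆ P` with `P \ CD` and `CD \ CORE` each contained in a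
set of `Zs`, and `Zs, Za` satisfy `Q^{(2,1)}(P, Zs, Za)`, then for any corrupt set
`Z* ∈ Za`, `CORE` contains an honest party: `CORE \ Z* ≠ ∅`. -/
theorem stmt16 {α : Type*} [DecidableEq α] (P : Finset α)
    (Zs Za : Finset (Finset α))
    (hQ : ∀ Z1 ∈ Zs, ∀ Z2 ∈ Zs, ∀ Z3 ∈ Za, Z1 ∪ Z2 ∪ Z3 ⊂ P)
    (CD CORE : Finset α) (hCD : CD ⊆ P) (hCORE : CORE ⊆ CD)
    (h1 : ∃ Z ∈ Zs, P \ CD ⊆ Z) (h2 : ∃ Z' ∈ Zs, CD \ CORE ⊆ Z')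
    (Zstar : Finset α) (hZstar : Zstar ∈ Za) :
    (CORE \ Zstar).Nonempty := by
  obtain ⟨Z, hZ, hZsub⟩ := h1
  obtain ⟨Z', hZ', hZ'sub⟩ := h2
  have hss := hQ Z hZ Z' hZ' Zstar hZstar
  obtain ⟨p, hpP, hp⟩ := Finset.exists_of_ssubset hss
  simp only [Finset.mem_union, not_or] at hp
  obtain ⟨⟨hpZ, hpZ'⟩, hpZs⟩ := hp
  have hpCD : p ∈ CD := by
    by_contra h
    exact hpZ (hZsub (Finset.mem_sdiff.mpr ⟨hpP, h⟩))
  have hpCORE : p ∈ CORE := by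
    by_contra h
    exact hpZ' (hZ'sub (Finset.mem_sdiff.mpr ⟨hpCD, h⟩))
  exact ⟨p, Finset.mem_sdiff.mpr ⟨hpCORE, hpZs⟩⟩
end

section
/- Let F be a finite field and r, a, b, b', c, c' ∈ F with e := r·b + b' and d := e·a − r·c − c'. Then d = 0 if and only if r·(a·b − c) = c' − a·b'. Consequently, if c ≠ a·b, there is exactly one r ∈ F for which d = 0; hence for uniformly random r, the probability that the check d = 0 passes despite c ≠ a·b is at most 1/|F|. -/
/-!
The check value `d` is affine in the challenge `r` with slope `a·b − c`, so a wrong product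
`c ≠ a·b` makes the slope a unit and `d = 0` pins down a single `r`.
-/

theorem triple_check_eq_zero_iff {R : Type*} [CommRing R] (r a b b' c c' : R) :
    (r * b + b') * a - r * c - c' = 0 ↔ r * (a * b - c) = c' - a * b' := by
  constructor <;> intro h <;> linear_combination h

theorem triple_check_eq_zero_iff_eq_div {K : Type*} [Field K] {a b c : K} (r b' c' : K)
    (h : c ≠ a * b) :
    (r * b + b') * a - r * c - c' = 0 ↔ r = (c' - a * b') / (a * b - c) := by
  rw [triple_check_eq_zero_iff, eq_div_iff (sub_ne_zero.2 h.symm)]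

/-- With `e = r·b + b'` and `d = e·a − r·c − c'`, we have `d = 0` iff
`r·(a·b − c) = c' − a·b'`. Consequently, if `c ≠ a·b`, there is exactly one `r` making
the check pass, so for uniformly random `r` the probability that `d = 0` despite
`c ≠ a·b` is at most `1/|F|`. -/
theorem stmt17 {F : Type*} [Field F] [Fintype F]
    (r a b b' c c' : F) :
    ((r * b + b') * a - r * c - c' = 0 ↔ r * (a * b - c) = c' - a * b') ∧
    (c ≠ a * b →
      (∃! r0 : F, (r0 * b + b') * a - r0 * c - c' = 0) ∧
      (({r0 : F | (r0 * b + b') * a - r0 * c - c' = 0} : Set F).ncard : ℚ) /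
          (Fintype.card F : ℚ) ≤ 1 / (Fintype.card F : ℚ)) := by
  refine ⟨triple_check_eq_zero_iff r a b b' c c', fun hc => ⟨?_, ?_⟩⟩
  · exact ⟨_, (triple_check_eq_zero_iff_eq_div _ b' c' hc).2 rfl,
      fun r0 h => (triple_check_eq_zero_iff_eq_div r0 b' c' hc).1 h⟩
  · have hpass : {r0 : F | (r0 * b + b') * a - r0 * c - c' = 0} =
        {(c' - a * b') / (a * b - c)} :=
      Set.ext fun r0 => triple_check_eq_zero_iff_eq_div r0 b' c' hc
    rw [hpass, Set.ncard_singleton, Nat.cast_one]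
end
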